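/- Uniform doubling property of the collapsing Riemannian metrics on the Heisenberg group: there exist constants C, R > 0, independent of ε, such that for every ε ∈ (0,1], every x ∈ ℝ³ and every 0 < r < R, the Lebesgue measure of the metric balls satisfies vol(B_ε(x,2r)) ≤ C · vol(B_ε(x,r)). -/

import Mathlib

open Real Set MeasureTheory

noncomputable section

/-- Points of the Heisenberg group `ℍ¹ = ℝ³` (Haar measure = Lebesgue measure). -/
abbrev Pt := Fin 3 → ℝ

/-- The σ_ε-norm of the velocity vector `v` at the point `x`: writing
`v = aX₁(x) + bX₂(x) + cX₃(x)` with `X₁(x) = (1,0,−x₂)`, `X₂(x) = (0,1,x₁)`,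
`X₃(x) = (0,0,2)` (so `a = v₀`, `b = v₁`, `c = (v₂ + v₀x₂ − v₁x₁)/2`), its square
is `a² + b² + c²/ε²`; this makes `X₁, X₂, εX₃` orthonormal. -/
def sigmaNorm (ε : ℝ) (x v : Pt) : ℝ :=
  Real.sqrt ((v 0) ^ 2 + (v 1) ^ 2 + ((v 2 + v 0 * x 1 - v 1 * x 0) / 2) ^ 2 / ε ^ 2)

/-- The Riemannian distance `d_ε`: the infimum of σ_ε-lengths of curves joining
`x` to `y`. -/
def dE (ε : ℝ) (x y : Pt) : ℝ :=
  sInf {L : ℝ | ∃ γ : ℝ → Pt, ∃ g : ℝ → Pt,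
    (∀ t ∈ Icc (0 : ℝ) 1, HasDerivAt γ (g t) t) ∧ ContinuousOn g (Icc 0 1) ∧
    γ 0 = x ∧ γ 1 = y ∧ L = ∫ t in (0 : ℝ)..1, sigmaNorm ε (γ t) (g t)}

/-- The metric ball `B_ε(x,r)`. -/
def ballE (ε : ℝ) (x : Pt) (r : ℝ) : Set Pt := {y | dE ε x y < r}

/-!
In the coordinates of `x⁻¹ · y`, the ball `B_ε(x, r)` is squeezed between two boxes. A path of
σ_ε-length `L` moves the horizontal coordinates by at most `L`, and, since the vertical velocity
is `2ε` times the `εX₃`-component plus horizontal velocity times horizontal excursion, it moves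
the vertical coordinate by at most `2εL + 2L²`; so `B_ε(x, ρ)` lies in a box of volume
`≍ ρ²(ερ + ρ²)`. Conversely, a point whose horizontal offset is `≲ r` is reached within length
`r` either along a straight segment if its vertical offset is `≲ εr`, or along a horizontal
segment followed by a horizontal circle if its vertical offset is `≲ r²`; so `B_ε(x, r)` contains
a box of volume `≍ r² max(εr, r²)`. Lebesgue measure is invariant under left translations, and
the ratio of the two volumes is bounded independently of `ε` and `r`.
-/

lemma hasDerivAt_ite_le {E : Type*} [NormedAddCommGroup E] [NormedSpace ℝ E]
    {f g : ℝ → E} {f' g' : E} {a t : ℝ}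
    (hf : t ≤ a → HasDerivAt f f' t) (hg : a ≤ t → HasDerivAt g g' t)
    (hfg : f a = g a) (hfg' : t = a → f' = g') :
    HasDerivAt (fun s => if s ≤ a then f s else g s) (if t ≤ a then f' else g') t := by
  rcases lt_trichotomy t a with ht | rfl | ht
  · rw [if_pos ht.le]
    refine (hf ht.le).congr_of_eventuallyEq ?_
    filter_upwards [Iio_mem_nhds ht] with s hs using if_pos (le_of_lt hs)
  · rw [if_pos le_rfl]
    have hleft : HasDerivWithinAt (fun s => if s ≤ t then f s else g s) f' (Iic t) t :=
      (hf le_rfl).hasDerivWithinAt.congr (fun s hs => if_pos hs) (if_pos le_rfl)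
    have hright : HasDerivWithinAt (fun s => if s ≤ t then f s else g s) f' (Ici t) t := by
      rw [hfg' rfl]
      refine (hg le_rfl).hasDerivWithinAt.congr (fun s hs => ?_) (by rw [if_pos le_rfl, hfg])
      split_ifs with h
      · rw [le_antisymm h hs, hfg]
      · rfl
    simpa only [Iic_union_Ici, hasDerivWithinAt_univ] using hleft.union hright
  · rw [if_neg (not_le.mpr ht)]
    refine (hg ht.le).congr_of_eventuallyEq ?_
    filter_upwards [Ioi_mem_nhds ht] with s hs using if_neg (not_le.mpr hs)

lemma abs_sub_le_integral_of_hasDerivAt {f f' B : ℝ → ℝ} {a b : ℝ} (hab : a ≤ b)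
    (hf : ∀ t ∈ Icc a b, HasDerivAt f (f' t) t) (hB : ∀ t ∈ Icc a b, |f' t| ≤ B t)
    (hBi : IntervalIntegrable B volume a b) : |f b - f a| ≤ ∫ t in a..b, B t :=
  norm_sub_le_integral_of_norm_deriv_le_of_le hab (HasDerivAt.continuousOn hf)
    (fun t ht => (hf t (Ioo_subset_Icc_self ht)).differentiableAt.differentiableWithinAt)
    (ae_of_all _ fun t ht => by
      rw [(hf t (Ioo_subset_Icc_self ht)).deriv]; exact hB t (Ioo_subset_Icc_self ht))
    hBi

namespace Heisenberg

lemma sigmaNorm_nonneg (ε : ℝ) (x v : Pt) : 0 ≤ sigmaNorm ε x v := Real.sqrt_nonneg _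

lemma continuous_sigmaNorm (ε : ℝ) : Continuous fun p : Pt × Pt => sigmaNorm ε p.1 p.2 := by
  unfold sigmaNorm; fun_prop

lemma sigmaNorm_zero (ε : ℝ) (x : Pt) : sigmaNorm ε x 0 = 0 := by
  simp [sigmaNorm]

lemma abs_apply_le_sigmaNorm (ε : ℝ) (x v : Pt) {i : Fin 3} (hi : i ≠ 2) :
    |v i| ≤ sigmaNorm ε x v := by
  rw [← Real.sqrt_sq_eq_abs]
  apply Real.sqrt_le_sqrt
  have : 0 ≤ ((v 2 + v 0 * x 1 - v 1 * x 0) / 2) ^ 2 / ε ^ 2 := by positivity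
  obtain rfl | rfl : i = 0 ∨ i = 1 := by fin_cases i <;> simp_all
  all_goals nlinarith [sq_nonneg (v 0), sq_nonneg (v 1)]

lemma abs_vertical_le_sigmaNorm {ε : ℝ} (hε : 0 < ε) (x v : Pt) :
    |v 2 + v 0 * x 1 - v 1 * x 0| ≤ 2 * ε * sigmaNorm ε x v := by
  set c := v 2 + v 0 * x 1 - v 1 * x 0
  have hS : c ^ 2 ≤ (2 * ε) ^ 2 * (v 0 ^ 2 + v 1 ^ 2 + (c / 2) ^ 2 / ε ^ 2) := by
    have : (2 * ε) ^ 2 * ((c / 2) ^ 2 / ε ^ 2) = c ^ 2 := by field_simp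
    nlinarith [sq_nonneg (v 0), sq_nonneg (v 1), sq_nonneg ε]
  calc |c| = Real.sqrt (c ^ 2) := (Real.sqrt_sq_eq_abs c).symm
    _ ≤ Real.sqrt ((2 * ε) ^ 2 * (v 0 ^ 2 + v 1 ^ 2 + (c / 2) ^ 2 / ε ^ 2)) :=
      Real.sqrt_le_sqrt hS
    _ = 2 * ε * sigmaNorm ε x v := by
      rw [Real.sqrt_mul (sq_nonneg _), Real.sqrt_sq (by positivity)]; rfl

lemma sigmaNorm_le {ε : ℝ} (hε : 0 < ε) (x v : Pt) :
    sigmaNorm ε x v ≤ |v 0| + |v 1| + |v 2 + v 0 * x 1 - v 1 * x 0| / (2 * ε) := by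
  rw [← Real.sqrt_sq (by positivity : 0 ≤ |v 0| + |v 1| + _)]
  apply Real.sqrt_le_sqrt
  have : ((v 2 + v 0 * x 1 - v 1 * x 0) / 2) ^ 2 / ε ^ 2
      = (|v 2 + v 0 * x 1 - v 1 * x 0| / (2 * ε)) ^ 2 := by
    rw [div_pow |_|, sq_abs]; field_simp
  rw [this]
  nlinarith [sq_abs (v 0), sq_abs (v 1), abs_nonneg (v 0), abs_nonneg (v 1),
    mul_nonneg (abs_nonneg (v 0)) (abs_nonneg (v 1)),
    mul_nonneg (abs_nonneg (v 0)) (by positivity : 0 ≤ |v 2 + v 0 * x 1 - v 1 * x 0| / (2 * ε)),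
    mul_nonneg (abs_nonneg (v 1)) (by positivity : 0 ≤ |v 2 + v 0 * x 1 - v 1 * x 0| / (2 * ε))]

lemma sigmaNorm_smul {s : ℝ} (hs : 0 ≤ s) (ε : ℝ) (x v : Pt) :
    sigmaNorm ε x (s • v) = s * sigmaNorm ε x v := by
  unfold sigmaNorm
  rw [← Real.sqrt_sq hs, ← Real.sqrt_mul (sq_nonneg s), Real.sqrt_sq hs]
  congr 1
  simp only [Pi.smul_apply, smul_eq_mul]
  ring

lemma sigmaNorm_add_smul_self (ε : ℝ) (x v : Pt) (u : ℝ) :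
    sigmaNorm ε (x + u • v) v = sigmaNorm ε x v := by
  unfold sigmaNorm
  congr 1
  simp only [Pi.add_apply, Pi.smul_apply, smul_eq_mul]
  ring

lemma sigmaNorm_of_horizontal (ε : ℝ) {x v : Pt} (hv : v 2 + v 0 * x 1 - v 1 * x 0 = 0) :
    sigmaNorm ε x v = Real.sqrt (v 0 ^ 2 + v 1 ^ 2) := by
  simp [sigmaNorm, hv]

def pathLengths (ε : ℝ) (x y : Pt) : Set ℝ := {L : ℝ | ∃ γ : ℝ → Pt, ∃ g : ℝ → Pt,
    (∀ t ∈ Icc (0 : ℝ) 1, HasDerivAt γ (g t) t) ∧ ContinuousOn g (Icc 0 1) ∧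
    γ 0 = x ∧ γ 1 = y ∧ L = ∫ t in (0 : ℝ)..1, sigmaNorm ε (γ t) (g t)}

def restPathLengths (ε : ℝ) (x y : Pt) : Set ℝ := {L : ℝ | ∃ γ : ℝ → Pt, ∃ g : ℝ → Pt,
    (∀ t, HasDerivAt γ (g t) t) ∧ Continuous g ∧ g 0 = 0 ∧ g 1 = 0 ∧
    γ 0 = x ∧ γ 1 = y ∧ L = ∫ t in (0 : ℝ)..1, sigmaNorm ε (γ t) (g t)}

variable {ε : ℝ} {x y z : Pt}

lemma restPathLengths_subset_pathLengths : restPathLengths ε x y ⊆ pathLengths ε x y := by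
  rintro L ⟨γ, g, hγ, hg, -, -, hγ0, hγ1, rfl⟩
  exact ⟨γ, g, fun t _ => hγ t, hg.continuousOn, hγ0, hγ1, rfl⟩

lemma nonneg_of_mem_pathLengths {L : ℝ} (h : L ∈ pathLengths ε x y) : 0 ≤ L := by
  obtain ⟨γ, g, -, -, -, -, rfl⟩ := h
  exact intervalIntegral.integral_nonneg zero_le_one fun t _ => sigmaNorm_nonneg _ _ _

lemma dE_le_of_mem_pathLengths {L : ℝ} (h : L ∈ pathLengths ε x y) : dE ε x y ≤ L :=
  csInf_le ⟨0, fun _ => nonneg_of_mem_pathLengths⟩ h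

lemma dE_le_of_mem_restPathLengths {L : ℝ} (h : L ∈ restPathLengths ε x y) : dE ε x y ≤ L :=
  dE_le_of_mem_pathLengths (restPathLengths_subset_pathLengths h)

lemma continuous_sigmaNorm_comp {γ g : ℝ → Pt} (hγ : ∀ t, HasDerivAt γ (g t) t)
    (hg : Continuous g) : Continuous fun t => sigmaNorm ε (γ t) (g t) :=
  (continuous_sigmaNorm ε).comp
    ((continuous_iff_continuousAt.mpr fun t => (hγ t).continuousAt).prodMk hg)

/-- Run each path at double speed; as both are at rest at the junction, the result is `C¹`. -/
lemma add_mem_restPathLengths {L₁ L₂ : ℝ} (h₁ : L₁ ∈ restPathLengths ε x y)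
    (h₂ : L₂ ∈ restPathLengths ε y z) : L₁ + L₂ ∈ restPathLengths ε x z := by
  obtain ⟨γ₁, g₁, hγ₁, hg₁, hg₁0, hg₁1, hγ₁0, hγ₁1, rfl⟩ := h₁
  obtain ⟨γ₂, g₂, hγ₂, hg₂, hg₂0, hg₂1, hγ₂0, hγ₂1, rfl⟩ := h₂
  set γ : ℝ → Pt := fun t => if t ≤ 1/2 then γ₁ (2 * t) else γ₂ (2 * t - 1)
  set g : ℝ → Pt := fun t => if t ≤ 1/2 then (2:ℝ) • g₁ (2 * t) else (2:ℝ) • g₂ (2 * t - 1)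
  have hγ : ∀ t, HasDerivAt γ (g t) t := by
    intro t
    refine hasDerivAt_ite_le (fun _ => ?_) (fun _ => ?_) ?_ ?_
    · simpa [Function.comp_def] using (hγ₁ (2 * t)).scomp t ((hasDerivAt_id t).const_mul 2)
    · simpa [Function.comp_def] using
        (hγ₂ (2 * t - 1)).scomp t (((hasDerivAt_id t).const_mul 2).sub_const 1)
    · norm_num [hγ₁1, hγ₂0]
    · rintro rfl; norm_num [hg₁1, hg₂0]
  have hg : Continuous g :=
    Continuous.if_le (by fun_prop) (by fun_prop) continuous_id continuous_const
      (by rintro t rfl; norm_num [hg₁1, hg₂0])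
  have hF := continuous_sigmaNorm_comp (ε := ε) hγ hg
  refine ⟨γ, g, hγ, hg, by simp [g, hg₁0], by norm_num [g, hg₂1], by simp [γ, hγ₁0],
    by norm_num [γ, hγ₂1], ?_⟩
  have hfirst : ∫ t in (0:ℝ)..1/2, sigmaNorm ε (γ t) (g t)
      = ∫ t in (0:ℝ)..1, sigmaNorm ε (γ₁ t) (g₁ t) := by
    rw [intervalIntegral.integral_congr (g := fun t => 2 * sigmaNorm ε (γ₁ (2 * t)) (g₁ (2 * t)))]
    · rw [intervalIntegral.integral_const_mul,
        intervalIntegral.integral_comp_mul_left (fun t => sigmaNorm ε (γ₁ t) (g₁ t)) two_ne_zero]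
      norm_num; ring
    · intro t ht
      rw [uIcc_of_le (by norm_num)] at ht
      simp only [γ, g, if_pos ht.2, sigmaNorm_smul zero_le_two]
  have hsecond : ∫ t in (1/2:ℝ)..1, sigmaNorm ε (γ t) (g t)
      = ∫ t in (0:ℝ)..1, sigmaNorm ε (γ₂ t) (g₂ t) := by
    rw [intervalIntegral.integral_congr
      (g := fun t => 2 * sigmaNorm ε (γ₂ (2 * t - 1)) (g₂ (2 * t - 1)))]
    · rw [intervalIntegral.integral_const_mul,
        intervalIntegral.integral_comp_mul_sub (fun t => sigmaNorm ε (γ₂ t) (g₂ t)) two_ne_zero]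
      norm_num; ring
    · intro t ht
      rw [uIcc_of_le (by norm_num)] at ht
      by_cases h : t ≤ 1/2
      · obtain rfl : t = 1/2 := le_antisymm h ht.1
        norm_num [γ, g, hg₁1, hg₂0, sigmaNorm_zero]
      · simp only [γ, g, if_neg h, sigmaNorm_smul zero_le_two]
  rw [← intervalIntegral.integral_add_adjacent_intervals (b := 1/2)
    (hF.intervalIntegrable _ _) (hF.intervalIntegrable _ _), hfirst, hsecond]

def ramp (t : ℝ) : ℝ := (1 - Real.cos (π * t)) / 2

lemma hasDerivAt_ramp (t : ℝ) : HasDerivAt ramp (π / 2 * Real.sin (π * t)) t := by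
  refine ((((Real.hasDerivAt_cos (π * t)).comp t
    ((hasDerivAt_id t).const_mul π)).const_sub 1).div_const 2).congr_deriv ?_
  ring

/-- Running a path of constant speed `v` on `[0, T]` with the speed profile of `ramp` brings it
to rest at both endpoints without changing its length. -/
lemma mul_mem_restPathLengths_of_speed {v T : ℝ} {c c' : ℝ → Pt} (hT : 0 ≤ T)
    (hc : ∀ u, HasDerivAt c (c' u) u) (hc' : Continuous c')
    (hv : ∀ u, sigmaNorm ε (c u) (c' u) = v) : T * v ∈ restPathLengths ε (c 0) (c T) := by
  have hφ : ∀ t, HasDerivAt (fun t => T * ramp t) (T * (π / 2 * Real.sin (π * t))) t :=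
    fun t => (hasDerivAt_ramp t).const_mul T
  have hφ' : Continuous fun t => T * (π / 2 * Real.sin (π * t)) := by fun_prop
  refine ⟨fun t => c (T * ramp t), fun t => (T * (π / 2 * Real.sin (π * t))) • c' (T * ramp t),
    fun t => (hc _).scomp t (hφ t), hφ'.smul (hc'.comp (by unfold ramp; fun_prop)),
    by simp, by simp, by simp [ramp], by simp [ramp], ?_⟩
  have hspeed : EqOn (fun t => sigmaNorm ε (c (T * ramp t))
      ((T * (π / 2 * Real.sin (π * t))) • c' (T * ramp t)))
      (fun t => T * (π / 2 * Real.sin (π * t)) * v) (uIcc 0 1) := by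
    intro t ht
    rw [uIcc_of_le zero_le_one] at ht
    have : 0 ≤ Real.sin (π * t) :=
      Real.sin_nonneg_of_nonneg_of_le_pi (by nlinarith [pi_pos, ht.1]) (by nlinarith [pi_pos, ht.2])
    simp only [sigmaNorm_smul (by positivity : 0 ≤ T * (π / 2 * Real.sin (π * t))), hv]
  rw [intervalIntegral.integral_congr hspeed, intervalIntegral.integral_mul_const,
    intervalIntegral.integral_eq_sub_of_hasDerivAt (fun t _ => hφ t) (hφ'.intervalIntegrable _ _)]
  simp [ramp]

lemma sigmaNorm_sub_mem_restPathLengths (ε : ℝ) (x y : Pt) :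
    sigmaNorm ε x (y - x) ∈ restPathLengths ε x y := by
  have hc : ∀ u : ℝ, HasDerivAt (fun u : ℝ => x + u • (y - x)) (y - x) u := fun u => by
    simpa using ((hasDerivAt_id u).smul_const (y - x)).const_add x
  simpa using mul_mem_restPathLengths_of_speed zero_le_one hc continuous_const
    (fun u => sigmaNorm_add_smul_self ε x (y - x) u)

lemma exists_mem_pathLengths_lt {r : ℝ} (h : dE ε x y < r) : ∃ L ∈ pathLengths ε x y, L < r :=
  exists_lt_of_csInf_lt
    ⟨_, restPathLengths_subset_pathLengths (sigmaNorm_sub_mem_restPathLengths ε x y)⟩ h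

/-- The horizontal lift through `z` of the planar circle of radius `s` through the origin,
run counterclockwise for `η = 1` and clockwise for `η = -1`; after a full turn it has risen by
`2π η s²`, twice the enclosed area. -/
def horizontalCircle (z : Pt) (s η θ : ℝ) : Pt :=
  z + ![s * Real.sin θ, η * s * (1 - Real.cos θ),
    -(s * z 1 * Real.sin θ) + η * s * z 0 * (1 - Real.cos θ) + η * s ^ 2 * (θ - Real.sin θ)]

def horizontalCircleDeriv (z : Pt) (s η θ : ℝ) : Pt :=
  ![s * Real.cos θ, η * s * Real.sin θ,
    -(s * z 1 * Real.cos θ) + η * s * z 0 * Real.sin θ + η * s ^ 2 * (1 - Real.cos θ)]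

lemma hasDerivAt_horizontalCircle (z : Pt) (s η θ : ℝ) :
    HasDerivAt (horizontalCircle z s η) (horizontalCircleDeriv z s η θ) θ := by
  refine HasDerivAt.const_add z (hasDerivAt_pi.mpr fun i => ?_)
  have hsin := Real.hasDerivAt_sin θ
  have hcos := (Real.hasDerivAt_cos θ).const_sub 1
  fin_cases i
  · exact hsin.const_mul s
  · exact (hcos.const_mul (η * s)).congr_deriv (by simp [horizontalCircleDeriv])
  · exact ((((hsin.const_mul (s * z 1)).neg.add (hcos.const_mul (η * s * z 0))).add
      (((hasDerivAt_id' θ).sub hsin).const_mul (η * s ^ 2)))).congr_deriv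
      (by simp [horizontalCircleDeriv])

lemma sigmaNorm_horizontalCircle (ε : ℝ) (z : Pt) {s η : ℝ} (hs : 0 ≤ s) (hη : η ^ 2 = 1)
    (θ : ℝ) : sigmaNorm ε (horizontalCircle z s η θ) (horizontalCircleDeriv z s η θ) = s := by
  have pyth := Real.sin_sq_add_cos_sq θ
  have hhor : horizontalCircleDeriv z s η θ 2
      + horizontalCircleDeriv z s η θ 0 * horizontalCircle z s η θ 1
      - horizontalCircleDeriv z s η θ 1 * horizontalCircle z s η θ 0 = 0 := by
    simp only [horizontalCircle, horizontalCircleDeriv, Pi.add_apply, Matrix.cons_val]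
    linear_combination (-(η * s ^ 2)) * pyth
  have hspeed : horizontalCircleDeriv z s η θ 0 ^ 2 + horizontalCircleDeriv z s η θ 1 ^ 2
      = s ^ 2 := by
    simp only [horizontalCircleDeriv, Matrix.cons_val]
    linear_combination (s ^ 2 * Real.sin θ ^ 2) * hη + s ^ 2 * pyth
  rw [sigmaNorm_of_horizontal ε hhor, hspeed, Real.sqrt_sq hs]

lemma horizontalCircle_zero (z : Pt) (s η : ℝ) : horizontalCircle z s η 0 = z := by
  ext i; fin_cases i <;> simp [horizontalCircle]

lemma horizontalCircle_two_pi (z : Pt) (s η : ℝ) :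
    horizontalCircle z s η (2 * π) = z + ![0, 0, 2 * π * η * s ^ 2] := by
  simp [horizontalCircle]
  ring

/-- The third coordinate of `x⁻¹ · y` in `ℍ¹`. -/
def vertOffset (x y : Pt) : ℝ := y 2 - x 2 - x 0 * (y 1 - x 1) + x 1 * (y 0 - x 0)

lemma dE_le_straight (hε : 0 < ε) (x y : Pt) :
    dE ε x y ≤ |y 0 - x 0| + |y 1 - x 1| + |vertOffset x y| / (2 * ε) := by
  refine (dE_le_of_mem_restPathLengths (sigmaNorm_sub_mem_restPathLengths ε x y)).trans ?_
  have hvert : (y - x) 2 + (y - x) 0 * x 1 - (y - x) 1 * x 0 = vertOffset x y := by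
    simp only [vertOffset, Pi.sub_apply]; ring
  have h := sigmaNorm_le hε x (y - x)
  rwa [hvert, Pi.sub_apply, Pi.sub_apply] at h

/-- A horizontal segment to the point above `y`, then a horizontal circle enclosing area
`|vertOffset x y| / 2`. -/
lemma dE_le_loop (hε : 0 < ε) (x y : Pt) :
    dE ε x y ≤ |y 0 - x 0| + |y 1 - x 1| + √(2 * π * |vertOffset x y|) := by
  set w := vertOffset x y
  set z : Pt := ![y 0, y 1, x 2 + x 0 * (y 1 - x 1) - x 1 * (y 0 - x 0)]
  set s := √(|w| / (2 * π))
  set η : ℝ := if 0 ≤ w then 1 else -1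
  have hη : η ^ 2 = 1 := by unfold η; split_ifs <;> norm_num
  have hw : 2 * π * η * s ^ 2 = w := by
    rw [Real.sq_sqrt (by positivity)]
    unfold η
    split_ifs with h
    · rw [abs_of_nonneg h]; field_simp
    · rw [abs_of_neg (not_le.mp h)]; field_simp
  have hzy : z + ![0, 0, w] = y := by
    ext i; fin_cases i <;> simp [z, w, vertOffset]
  have hsegment := sigmaNorm_sub_mem_restPathLengths ε x z
  have hcircle := mul_mem_restPathLengths_of_speed (ε := ε) (by positivity : 0 ≤ 2 * π)
    (hasDerivAt_horizontalCircle z s η)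
    (by unfold horizontalCircleDeriv; fun_prop)
    (sigmaNorm_horizontalCircle ε z (Real.sqrt_nonneg _) hη)
  rw [horizontalCircle_zero, horizontalCircle_two_pi, hw, hzy] at hcircle
  have hsegment_le : sigmaNorm ε x (z - x) ≤ |y 0 - x 0| + |y 1 - x 1| := by
    have hhor : (z - x) 2 + (z - x) 0 * x 1 - (z - x) 1 * x 0 = 0 := by
      simp only [z, Pi.sub_apply, Matrix.cons_val]; ring
    have h := sigmaNorm_le hε x (z - x)
    rw [hhor, abs_zero, zero_div, add_zero] at h
    simpa [z] using h
  have hcircle_eq : 2 * π * s = √(2 * π * |w|) := by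
    rw [show 2 * π * |w| = (2 * π) ^ 2 * (|w| / (2 * π)) by field_simp,
      Real.sqrt_mul (by positivity), Real.sqrt_sq (by positivity)]
  linarith [dE_le_of_mem_restPathLengths (add_mem_restPathLengths hsegment hcircle)]

def box (x : Pt) (A C : ℝ) : Set Pt :=
  {y | |y 0 - x 0| ≤ A ∧ |y 1 - x 1| ≤ A ∧ |vertOffset x y| ≤ C}

lemma box_mono {A A' C C' : ℝ} (hA : A ≤ A') (hC : C ≤ C') : box x A C ⊆ box x A' C' :=
  fun _ ⟨h0, h1, h2⟩ => ⟨h0.trans hA, h1.trans hA, h2.trans hC⟩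

lemma mem_box_of_mem_pathLengths (hε : 0 < ε) {L : ℝ} (hL : L ∈ pathLengths ε x y) :
    y ∈ box x L (2 * ε * L + 2 * L ^ 2) := by
  obtain ⟨γ, g, hγ, hg, rfl, rfl, rfl⟩ := hL
  set F : ℝ → ℝ := fun t => sigmaNorm ε (γ t) (g t)
  set L := ∫ t in (0:ℝ)..1, F t
  have hF : ContinuousOn F (Icc 0 1) :=
    (continuous_sigmaNorm ε).comp_continuousOn ((HasDerivAt.continuousOn hγ).prodMk hg)
  have hγi : ∀ i, ∀ t ∈ Icc (0:ℝ) 1, HasDerivAt (fun s => γ s i) (g t i) t :=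
    fun i t ht => hasDerivAt_pi.mp (hγ t ht) i
  have hexcursion : ∀ i ≠ 2, ∀ t ∈ Icc (0:ℝ) 1, |γ t i - γ 0 i| ≤ L := by
    intro i hi t ht
    have hsub : Icc 0 t ⊆ Icc (0:ℝ) 1 := Icc_subset_Icc le_rfl ht.2
    calc |γ t i - γ 0 i| ≤ ∫ s in (0:ℝ)..t, F s :=
          abs_sub_le_integral_of_hasDerivAt ht.1 (fun s hs => hγi i s (hsub hs))
            (fun s _ => abs_apply_le_sigmaNorm ε _ _ hi)
            ((hF.mono hsub).intervalIntegrable_of_Icc ht.1)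
      _ ≤ L := intervalIntegral.integral_mono_interval le_rfl ht.1 ht.2
          (ae_of_all _ fun s => sigmaNorm_nonneg _ _ _) (hF.intervalIntegrable_of_Icc zero_le_one)
  have hvertical : ∀ t ∈ Icc (0:ℝ) 1,
      |g t 2 - γ 0 0 * g t 1 + γ 0 1 * g t 0| ≤ (2 * ε + 2 * L) * F t := by
    intro t ht
    have h₁ := abs_vertical_le_sigmaNorm hε (γ t) (g t)
    have h₂ : |g t 0 * (γ t 1 - γ 0 1)| ≤ F t * L := by
      rw [abs_mul]
      exact mul_le_mul (abs_apply_le_sigmaNorm ε _ _ (by decide)) (hexcursion 1 (by decide) t ht)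
        (abs_nonneg _) (sigmaNorm_nonneg _ _ _)
    have h₃ : |g t 1 * (γ t 0 - γ 0 0)| ≤ F t * L := by
      rw [abs_mul]
      exact mul_le_mul (abs_apply_le_sigmaNorm ε _ _ (by decide)) (hexcursion 0 (by decide) t ht)
        (abs_nonneg _) (sigmaNorm_nonneg _ _ _)
    calc |g t 2 - γ 0 0 * g t 1 + γ 0 1 * g t 0|
        = |(g t 2 + g t 0 * γ t 1 - g t 1 * γ t 0) - g t 0 * (γ t 1 - γ 0 1)
            + g t 1 * (γ t 0 - γ 0 0)| := by congr 1; ring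
      _ ≤ 2 * ε * F t + F t * L + F t * L := by
        linarith [abs_add_le (g t 2 + g t 0 * γ t 1 - g t 1 * γ t 0 - g t 0 * (γ t 1 - γ 0 1))
          (g t 1 * (γ t 0 - γ 0 0)), abs_sub (g t 2 + g t 0 * γ t 1 - g t 1 * γ t 0)
          (g t 0 * (γ t 1 - γ 0 1))]
      _ = (2 * ε + 2 * L) * F t := by ring
  refine ⟨hexcursion 0 (by decide) 1 ⟨zero_le_one, le_rfl⟩,
    hexcursion 1 (by decide) 1 ⟨zero_le_one, le_rfl⟩, ?_⟩
  have h := abs_sub_le_integral_of_hasDerivAt (f := fun s => γ s 2 - γ 0 0 * γ s 1 + γ 0 1 * γ s 0)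
    zero_le_one (fun t ht => ((hγi 2 t ht).sub ((hγi 1 t ht).const_mul (γ 0 0))).add
      ((hγi 0 t ht).const_mul (γ 0 1))) hvertical
    ((hF.intervalIntegrable_of_Icc zero_le_one).const_mul _)
  rw [intervalIntegral.integral_const_mul] at h
  convert h using 2
  · simp only [vertOffset]; ring
  · ring

lemma ballE_subset_box (hε : 0 < ε) (x : Pt) (ρ : ℝ) :
    ballE ε x ρ ⊆ box x ρ (2 * ε * ρ + 2 * ρ ^ 2) := by
  intro y hy
  obtain ⟨L, hL, hLρ⟩ := exists_mem_pathLengths_lt hy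
  have hL0 := nonneg_of_mem_pathLengths hL
  exact box_mono hLρ.le (by nlinarith) (mem_box_of_mem_pathLengths hε hL)

lemma box_subset_ballE (hε : 0 < ε) (x : Pt) {r : ℝ} (hr : 0 < r) :
    box x (r / 4) (max (ε * r / 4) (r ^ 2 / (32 * π))) ⊆ ballE ε x r := by
  rintro y ⟨h0, h1, h2⟩
  show dE ε x y < r
  rcases max_choice (ε * r / 4) (r ^ 2 / (32 * π)) with hmax | hmax <;> rw [hmax] at h2
  · have : |vertOffset x y| / (2 * ε) ≤ r / 8 := by
      rw [div_le_iff₀ (by positivity)]; linarith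
    linarith [dE_le_straight hε x y]
  · have : √(2 * π * |vertOffset x y|) ≤ r / 4 := by
      rw [Real.sqrt_le_left (by positivity)]
      calc 2 * π * |vertOffset x y| ≤ 2 * π * (r ^ 2 / (32 * π)) := by gcongr
        _ = (r / 4) ^ 2 := by field_simp; ring
    linarith [dE_le_loop hε x y]

/-- The map `y ↦ x⁻¹ · y` is a shear followed by a translation. -/
lemma volume_box (x : Pt) {A C : ℝ} (hA : 0 ≤ A) :
    volume (box x A C) = ENNReal.ofReal (8 * A ^ 2 * C) := by
  set M : Matrix (Fin 3) (Fin 3) ℝ := !![1, 0, 0; 0, 1, 0; x 1, -x 0, 1]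
  have hdet : LinearMap.det (Matrix.toLin' M) = 1 := by
    rw [LinearMap.det_toLin', Matrix.det_fin_three]; simp [M]
  have hmap : ∀ y, -x + Matrix.toLin' M y = ![y 0 - x 0, y 1 - x 1, vertOffset x y] := by
    intro y; ext i
    fin_cases i <;> simp [M, vertOffset, dotProduct, Fin.sum_univ_three] <;> ring
  have hbox : box x A C = Matrix.toLin' M ⁻¹' ((fun z => -x + z) ⁻¹'
      univ.pi fun i => Icc (-![A, A, C] i) (![A, A, C] i)) := by
    ext y
    rw [mem_preimage, mem_preimage, hmap, mem_univ_pi]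
    simp [box, Fin.forall_fin_succ, abs_le]
  rw [hbox, Measure.addHaar_preimage_linearMap _ (by rw [hdet]; norm_num), measure_preimage_add,
    hdet, volume_pi_pi, Fin.prod_univ_three]
  simp only [Real.volume_Icc, Matrix.cons_val_zero, Matrix.cons_val_one, Matrix.cons_val_two,
    Matrix.head_cons, Matrix.tail_cons, inv_one, abs_one, ENNReal.ofReal_one, one_mul]
  rw [← ENNReal.ofReal_mul (by linarith), ← ENNReal.ofReal_mul (by nlinarith)]
  ring_nf

end Heisenberg

open Heisenberg

/-- Uniform doubling property of the collapsing Riemannian metrics on the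
Heisenberg group: there are `C, R > 0`, independent of `ε ∈ (0,1]`, with
`vol(B_ε(x,2r)) ≤ C · vol(B_ε(x,r))` for all `x` and `0 < r < R`. -/
theorem statement_18 :
    ∃ C : ℝ, 0 < C ∧ ∃ R : ℝ, 0 < R ∧
      ∀ ε ∈ Ioc (0 : ℝ) 1, ∀ x : Pt, ∀ r ∈ Ioo (0 : ℝ) R,
        volume (ballE ε x (2 * r)) ≤ ENNReal.ofReal C * volume (ballE ε x r) := by
  refine ⟨66560, by norm_num, 1, one_pos, ?_⟩
  rintro ε ⟨hε, -⟩ x r ⟨hr, -⟩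
  set M := max (ε * r / 4) (r ^ 2 / (32 * π))
  have hM : 0 ≤ M := le_max_of_le_left (by positivity)
  have hεr : ε * r ≤ 4 * M := by linarith [le_max_left (ε * r / 4) (r ^ 2 / (32 * π))]
  have hr2 : r ^ 2 ≤ 128 * M := by
    have := (div_le_iff₀ (by positivity)).mp (le_max_right (ε * r / 4) (r ^ 2 / (32 * π)))
    nlinarith [pi_le_four]
  calc volume (ballE ε x (2 * r))
      ≤ volume (box x (2 * r) (2 * ε * (2 * r) + 2 * (2 * r) ^ 2)) :=
        measure_mono (ballE_subset_box hε x _)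
    _ = ENNReal.ofReal (8 * (2 * r) ^ 2 * (2 * ε * (2 * r) + 2 * (2 * r) ^ 2)) :=
        volume_box x (by positivity)
    _ ≤ ENNReal.ofReal (66560 * (8 * (r / 4) ^ 2 * M)) :=
        ENNReal.ofReal_le_ofReal (by nlinarith [sq_nonneg r])
    _ = ENNReal.ofReal 66560 * volume (box x (r / 4) M) := by
        rw [volume_box x (by positivity), ENNReal.ofReal_mul (by norm_num)]
    _ ≤ ENNReal.ofReal 66560 * volume (ballE ε x r) := by
        gcongr; exact box_subset_ballE hε x hr

end
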